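/- Let p_n ∈ ℤ[z] be defined by p_0 = 0 and p_{n+1} = p_n^2 + z. For every n ≥ 1, the cardinality of hyp(n) satisfies |hyp(n)| = ∑_{k | n} μ(n/k) · 2^{k−1}, where μ is the Möbius function and the sum runs over all positive divisors k of n. -/

import Mathlib

open Polynomial

/-- The polynomials `p n` defined by `p 0 = 0`, `p (n+1) = p n ^ 2 + X`. -/
noncomputable def P : ℕ → Polynomial ℤ
  | 0 => 0
  | n + 1 => P n ^ 2 + X

/-- The Misiurewicz–Thurston polynomials `q l n = p (l + n) - p l`. -/
noncomputable def Q (l n : ℕ) : Polynomial ℤ := P (l + n) - P l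

/-- `p n` viewed over `ℂ`. -/
noncomputable def pC (n : ℕ) : Polynomial ℂ := (P n).map (Int.castRingHom ℂ)

/-- `q l n` viewed over `ℂ`. -/
noncomputable def qC (l n : ℕ) : Polynomial ℂ := (Q l n).map (Int.castRingHom ℂ)

/-- Hyperbolic centers of order `n`: roots of `p n` that are not roots of `p k`
for any strict divisor `k` of `n`. -/
def hyp (n : ℕ) : Set ℂ :=
  {z | (pC n).eval z = 0 ∧ ∀ k : ℕ, k ∣ n → k ≠ n → (pC k).eval z ≠ 0}

/-- Misiurewicz points of type `(l, n)`. -/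
def mis (l n : ℕ) : Set ℂ :=
  {z | (qC l n).eval z = 0 ∧ (qC (l - 1) n).eval z ≠ 0 ∧
    ∀ k : ℕ, k ∣ n → k ≠ n → (qC l k).eval z ≠ 0}

/-- Gleason's polynomial `h n = ∏_{r ∈ hyp n} (X - r)`. -/
noncomputable def hPoly (n : ℕ) : Polynomial ℂ := ∏ᶠ r ∈ hyp n, (X - C r)

/-- Reduced Misiurewicz polynomial `m l n = ∏_{r ∈ mis l n} (X - r)`. -/
noncomputable def mPoly (l n : ℕ) : Polynomial ℂ := ∏ᶠ r ∈ mis l n, (X - C r)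

/-- The multiplicity `η l k = ⌊(l - 1)/k⌋ + 2`, with the conventions
`η 0 k = 1` (floor taken in `ℤ`) and `η 1 k = 2`. -/
def eta (l k : ℕ) : ℕ := if l = 0 then 1 else (l - 1) / k + 2

open scoped ArithmeticFunction ArithmeticFunction.Moebius

/-! ### Auxiliary lemmas -/

lemma P_succ_def (n : ℕ) : P (n + 1) = P n ^ 2 + X := rfl

lemma P_monic_natDegree (n : ℕ) : (P (n + 1)).Monic ∧ (P (n + 1)).natDegree = 2 ^ n := by
  induction n with
  | zero =>
    have : P 1 = X := by simp [P_succ_def, P]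
    rw [this]
    exact ⟨monic_X, natDegree_X⟩
  | succ n ih =>
    obtain ⟨hm, hd⟩ := ih
    have hm2 : (P (n + 1) ^ 2).Monic := hm.pow 2
    have hd2 : (P (n + 1) ^ 2).natDegree = 2 ^ (n + 1) := by
      rw [natDegree_pow, hd]; ring
    have hlt : (X : Polynomial ℤ).degree < (P (n + 1) ^ 2).degree := by
      rw [degree_X, degree_eq_natDegree hm2.ne_zero, hd2]
      exact_mod_cast Nat.one_lt_two_pow_iff.mpr (Nat.succ_ne_zero n)
    refine ⟨hm2.add_of_left hlt, ?_⟩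
    rw [P_succ_def, natDegree_add_eq_left_of_degree_lt hlt, hd2]

lemma pC_monic (n : ℕ) : (pC (n + 1)).Monic := ((P_monic_natDegree n).1).map _

lemma pC_natDegree (n : ℕ) : (pC (n + 1)).natDegree = 2 ^ n := by
  rw [pC, natDegree_map_of_leadingCoeff_ne_zero]
  · exact (P_monic_natDegree n).2
  · rw [(P_monic_natDegree n).1.leadingCoeff]
    simp

lemma pC_ne_zero {n : ℕ} (hn : 0 < n) : pC n ≠ 0 := by
  obtain ⟨m, rfl⟩ := Nat.exists_eq_add_of_lt hn
  simpa using (pC_monic m).ne_zero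

lemma pC_zero_eval (z : ℂ) : (pC 0).eval z = 0 := by simp [pC, P]

lemma pC_succ_eval (n : ℕ) (z : ℂ) : (pC (n + 1)).eval z = ((pC n).eval z) ^ 2 + z := by
  simp [pC, P_succ_def, Polynomial.map_add, Polynomial.map_pow]

lemma eval_shift {z : ℂ} {a : ℕ} (h : (pC a).eval z = 0) :
    ∀ b : ℕ, (pC (a + b)).eval z = (pC b).eval z := by
  intro b
  induction b with
  | zero => rw [Nat.add_zero, h, pC_zero_eval]
  | succ b ih =>
    have : a + (b + 1) = (a + b) + 1 := rfl
    rw [this, pC_succ_eval, ih, pC_succ_eval]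

lemma eval_dvd {z : ℂ} {k m : ℕ} (h : (pC k).eval z = 0) (hkm : k ∣ m) :
    (pC m).eval z = 0 := by
  obtain ⟨t, rfl⟩ := hkm
  induction t with
  | zero => simpa using pC_zero_eval z
  | succ t ih =>
    rw [Nat.mul_succ, eval_shift ih, h]

lemma eval_gcd {z : ℂ} {a b : ℕ} (ha : (pC a).eval z = 0) (hb : (pC b).eval z = 0) :
    (pC (Nat.gcd a b)).eval z = 0 := by
  induction a, b using Nat.gcd.induction with
  | H0 b => simpa using hb
  | H1 m n hm ih =>
    rw [Nat.gcd_rec]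
    refine ih ?_ ha
    have h1 : (pC (m * (n / m))).eval z = 0 := eval_dvd ha ⟨n / m, rfl⟩
    have h2 := eval_shift h1 (n % m)
    rw [Nat.div_add_mod] at h2
    rw [← h2, hb]

lemma hyp_eq {a b : ℕ} {z : ℂ} (ha : z ∈ hyp a) (hb : z ∈ hyp b) : a = b := by
  have hg : (pC (Nat.gcd a b)).eval z = 0 := eval_gcd ha.1 hb.1
  have h1 : Nat.gcd a b = a := by
    by_contra h
    exact ha.2 _ (Nat.gcd_dvd_left a b) h hg
  have h2 : Nat.gcd a b = b := by
    by_contra h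
    exact hb.2 _ (Nat.gcd_dvd_right a b) h hg
  rw [← h1, h2]

lemma exists_mem_hyp : ∀ n : ℕ, 0 < n → ∀ z : ℂ, (pC n).eval z = 0 →
    ∃ d, d ∣ n ∧ z ∈ hyp d := by
  intro n
  induction n using Nat.strong_induction_on with
  | _ n IH =>
    intro hn z hz
    by_cases h2 : ∀ k : ℕ, k ∣ n → k ≠ n → (pC k).eval z ≠ 0
    · exact ⟨n, dvd_refl n, hz, h2⟩
    · push_neg at h2
      obtain ⟨k, hk, hkn, hke⟩ := h2
      have hk0 : 0 < k := by
        rcases Nat.eq_zero_or_pos k with rfl | h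
        · exact absurd (Nat.eq_zero_of_zero_dvd hk) hn.ne'
        · exact h
      have hklt : k < n := lt_of_le_of_ne (Nat.le_of_dvd hn hk) hkn
      obtain ⟨d, hd, hzd⟩ := IH k hklt hk0 z hke
      exact ⟨d, hd.trans hk, hzd⟩

/-! ### Squarefreeness (Gleason) -/

lemma sep_mod (n : ℕ) : ((P (n + 1)).map (Int.castRingHom (ZMod 2))).Separable := by
  rw [separable_def, derivative_map]
  have : derivative (P (n + 1)) = C 2 * P n * derivative (P n) + 1 := by
    rw [P_succ_def, derivative_add, derivative_sq, derivative_X]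
  rw [this]
  have h2 : (Int.castRingHom (ZMod 2)) 2 = 0 := by decide
  have hmap : ((C 2 * P n * derivative (P n) + 1 : Polynomial ℤ)).map
      (Int.castRingHom (ZMod 2)) = 1 := by
    simp only [Polynomial.map_add, Polynomial.map_mul, Polynomial.map_one, map_C, h2,
      C_0, zero_mul]
    rw [zero_add]
  rw [hmap]
  exact isCoprime_one_right

lemma sqfree_int (n : ℕ) : Squarefree (P (n + 1)) := by
  have hs : Squarefree ((P (n + 1)).map (Int.castRingHom (ZMod 2))) :=
    (sep_mod n).squarefree
  intro a ha
  obtain ⟨b, hb⟩ := ha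
  have hlc : IsUnit a.leadingCoeff := by
    have h := congrArg leadingCoeff hb
    rw [(P_monic_natDegree n).1.leadingCoeff, leadingCoeff_mul, leadingCoeff_mul] at h
    have h' : a.leadingCoeff * (a.leadingCoeff * b.leadingCoeff) = 1 := by
      rw [← mul_assoc]; exact h.symm
    exact IsUnit.of_mul_eq_one _ h' 
  have hlcne : (Int.castRingHom (ZMod 2)) a.leadingCoeff ≠ 0 := by
    rcases Int.isUnit_iff.mp hlc with h | h <;> rw [h] <;> decide
  have hmapdvd : (a.map (Int.castRingHom (ZMod 2))) * (a.map (Int.castRingHom (ZMod 2)))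
      ∣ (P (n + 1)).map (Int.castRingHom (ZMod 2)) := by
    refine ⟨b.map (Int.castRingHom (ZMod 2)), ?_⟩
    rw [hb]; simp [Polynomial.map_mul]
  have hmap : IsUnit (a.map (Int.castRingHom (ZMod 2))) := hs _ hmapdvd
  have hdeg : a.natDegree = 0 := by
    rw [← natDegree_map_of_leadingCoeff_ne_zero _ hlcne]
    exact natDegree_eq_zero_of_isUnit hmap
  have := eq_C_of_natDegree_eq_zero hdeg
  rw [this]
  rw [isUnit_C]
  have : a.leadingCoeff = a.coeff 0 := by rw [leadingCoeff, hdeg]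
  rw [← this]
  exact hlc

lemma sqfree_rat (n : ℕ) : Squarefree ((P (n + 1)).map (algebraMap ℤ ℚ)) := by
  intro a ha
  rcases eq_or_ne a 0 with rfl | ha0
  · exfalso
    rw [zero_mul, zero_dvd_iff] at ha
    exact ((P_monic_natDegree n).1.map (algebraMap ℤ ℚ)).ne_zero ha
  set b := a * C a.leadingCoeff⁻¹ with hbdef
  have hbmonic : b.Monic := monic_mul_leadingCoeff_inv ha0
  have hu : IsUnit (C a.leadingCoeff⁻¹ : Polynomial ℚ) :=
    isUnit_C.mpr (IsUnit.mk0 _ (inv_ne_zero (leadingCoeff_ne_zero.mpr ha0)))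
  have hbb : b * b ∣ (P (n + 1)).map (algebraMap ℤ ℚ) := by
    have heq : b * b = (a * a) * (C a.leadingCoeff⁻¹ * C a.leadingCoeff⁻¹) := by ring
    have hassoc : Associated (b * b) (a * a) :=
      heq ▸ associated_mul_unit_left (a * a) _ (hu.mul hu)
    exact hassoc.dvd.trans ha
  have hbdvd : b ∣ (P (n + 1)).map (algebraMap ℤ ℚ) := (dvd_mul_right b b).trans hbb
  obtain ⟨a', ha'⟩ := IsIntegrallyClosed.eq_map_mul_C_of_dvd ℚ (P_monic_natDegree n).1 hbdvd
  rw [hbmonic.leadingCoeff, map_one, mul_one] at ha'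
  have ha'monic : a'.Monic := monic_of_injective
    (algebraMap ℤ ℚ).injective_int (by rw [ha']; exact hbmonic)
  have hdvdZ : a' * a' ∣ P (n + 1) := by
    refine (P_monic_natDegree n).1.dvd_of_fraction_map_dvd_fraction_map (K := ℚ)
      (ha'monic.mul ha'monic) ?_
    rw [Polynomial.map_mul, ha']
    exact hbb
  have hua' : IsUnit a' := sqfree_int n a' hdvdZ
  have hub : IsUnit b := by
    rw [← ha']
    exact hua'.map (mapRingHom (algebraMap ℤ ℚ))
  exact isUnit_of_mul_isUnit_left (hbdef ▸ hub)

lemma pC_eq_map_rat (n : ℕ) :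
    pC n = ((P n).map (algebraMap ℤ ℚ)).map (algebraMap ℚ ℂ) := by
  rw [pC, map_map]
  congr 1

lemma pC_separable (n : ℕ) : (pC (n + 1)).Separable := by
  rw [pC_eq_map_rat]
  exact ((PerfectField.separable_iff_squarefree).mpr (sqfree_rat n)).map

lemma pC_roots_card (n : ℕ) : (pC (n + 1)).roots.toFinset.card = 2 ^ n := by
  rw [Multiset.toFinset_card_of_nodup (nodup_roots (pC_separable n)),
    splits_iff_card_roots.mp (IsAlgClosed.splits _), pC_natDegree]

/-! ### Counting -/

open Classical in
lemma key_sum (m : ℕ) (hm : 0 < m) :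
    ∑ k ∈ m.divisors, ((hyp k).ncard : ℤ) = 2 ^ (m - 1) := by
  classical
  set F : ℕ → Finset ℂ := fun k => (pC k).roots.toFinset.filter (· ∈ hyp k) with hF
  have hFmem : ∀ k, 0 < k → ∀ z : ℂ, z ∈ F k ↔ z ∈ hyp k := by
    intro k hk z
    rw [hF]
    simp only [Finset.mem_filter, Multiset.mem_toFinset]
    constructor
    · rintro ⟨-, h⟩; exact h
    · intro h
      exact ⟨(mem_roots (pC_ne_zero hk)).mpr h.1, h⟩
  have hFhyp : ∀ k, 0 < k → (F k : Set ℂ) = hyp k := by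
    intro k hk
    ext z
    simpa using hFmem k hk z
  have hunion : (pC m).roots.toFinset = m.divisors.biUnion F := by
    ext z
    rw [Finset.mem_biUnion, Multiset.mem_toFinset]
    constructor
    · intro hz
      have hz' : (pC m).eval z = 0 := (mem_roots (pC_ne_zero hm)).mp hz
      obtain ⟨d, hd, hzd⟩ := exists_mem_hyp m hm z hz'
      have hd0 : 0 < d := Nat.pos_of_dvd_of_pos hd hm
      exact ⟨d, Nat.mem_divisors.mpr ⟨hd, hm.ne'⟩, (hFmem d hd0 z).mpr hzd⟩
    · rintro ⟨k, hk, hz⟩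
      obtain ⟨hkdvd, -⟩ := Nat.mem_divisors.mp hk
      have hk0 : 0 < k := Nat.pos_of_dvd_of_pos hkdvd hm
      have := ((hFmem k hk0 z).mp hz).1
      exact (mem_roots (pC_ne_zero hm)).mpr (eval_dvd this hkdvd)
  have hdisj : ∀ a ∈ m.divisors, ∀ b ∈ m.divisors, a ≠ b → Disjoint (F a) (F b) := by
    intro a _ b _ hab
    rw [Finset.disjoint_left]
    intro z hza hzb
    rw [hF] at hza hzb
    simp only [Finset.mem_filter] at hza hzb
    exact hab (hyp_eq hza.2 hzb.2)
  have hcard : ∑ k ∈ m.divisors, (F k).card = 2 ^ (m - 1) := by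
    rw [← Finset.card_biUnion hdisj, ← hunion]
    obtain ⟨m', rfl⟩ := Nat.exists_eq_add_of_lt hm
    simpa using pC_roots_card m'
  calc ∑ k ∈ m.divisors, ((hyp k).ncard : ℤ)
      = ∑ k ∈ m.divisors, ((F k).card : ℤ) := by
        refine Finset.sum_congr rfl fun k hk => ?_
        have hk0 : 0 < k := Nat.pos_of_mem_divisors hk
        rw [← hFhyp k hk0, Set.ncard_coe_finset]
    _ = 2 ^ (m - 1) := by exact_mod_cast congrArg (Nat.cast : ℕ → ℤ) hcard

/-- The number of hyperbolic centers of order `n` is `∑_{k ∣ n} μ(n/k) 2^(k-1)`. -/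
theorem hyp_card (n : ℕ) (hn : 1 ≤ n) :
    ((hyp n).ncard : ℤ) = ∑ k ∈ n.divisors, μ (n / k) * 2 ^ (k - 1) := by
  have h := (ArithmeticFunction.sum_eq_iff_sum_smul_moebius_eq
    (f := fun k => ((hyp k).ncard : ℤ)) (g := fun m => 2 ^ (m - 1))).mp
    (fun m hm => key_sum m hm) n hn
  rw [← h, Nat.sum_divisorsAntidiagonal' (f := fun a b => μ a • (2 : ℤ) ^ (b - 1))]
  refine Finset.sum_congr rfl fun k _ => ?_
  rw [zsmul_eq_mul, Int.cast_id]
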